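/- The clique number of the non-cyclic graph of the alternating group A_5 equals 31. In particular, taking the 15 non-trivial elements of all five Sylow 2-subgroups together with one generator from each of the ten Sylow 3-subgroups and each of the six Sylow 5-subgroups yields a set of 31 elements any two of which generate a non-cyclic subgroup, and no clique is larger since A_5 is the union of 31 maximal cyclic subgroups. -/

import Mathlib

/-- The cyclicizer of a group: elements generating a cyclic subgroup with every element. -/
def cyclicizer (G : Type*) [Group G] : Set G :=
  {x | ∀ y : G, IsCyclic (Subgroup.closure {x, y} : Subgroup G)}

/-- The relative cyclicizer of an element. -/
def relCyclicizer {G : Type*} [Group G] (x : G) : Set G :=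
  {g | IsCyclic (Subgroup.closure {g, x} : Subgroup G)}

/-- A group is locally cyclic if every finitely generated subgroup is cyclic. -/
def IsLocallyCyclic (G : Type*) [Group G] : Prop :=
  ∀ H : Subgroup G, H.FG → IsCyclic H

/-- The non-cyclic graph of a group. -/
def noncyclicGraph (G : Type*) [Group G] :
    SimpleGraph {g : G // g ∉ cyclicizer G} where
  Adj x y := x ≠ y ∧ ¬ IsCyclic (Subgroup.closure {(x : G), (y : G)} : Subgroup G)
  symm := ⟨fun x y h => ⟨h.1.symm, by rw [Set.pair_comm]; exact h.2⟩⟩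
  loopless := ⟨fun x h => h.1 rfl⟩

/-- The cyclic graph of a group (complement of the non-cyclic graph). -/
def cyclicGraph (G : Type*) [Group G] :
    SimpleGraph {g : G // g ∉ cyclicizer G} where
  Adj x y := x ≠ y ∧ IsCyclic (Subgroup.closure {(x : G), (y : G)} : Subgroup G)
  symm := ⟨fun x y h => ⟨h.1.symm, by rw [Set.pair_comm]; exact h.2⟩⟩
  loopless := ⟨fun x h => h.1 rfl⟩

/-- A graph has clique number `n` if it has a clique of size `n` and no larger clique. -/
def hasCliqueNum {V : Type*} (Γ : SimpleGraph V) (n : ℕ) : Prop :=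
  (∃ s : Finset V, Γ.IsNClique n s) ∧ ∀ s : Finset V, Γ.IsClique (s : Set V) → s.card ≤ n

/-!
In `A₅` every nontrivial element has prime order, so two nontrivial elements generate a cyclic
subgroup exactly when they generate the same cyclic subgroup. Hence the non-cyclic graph is
complete multipartite, its parts being the generator sets of the nontrivial cyclic subgroups, and
its clique number is the number of these subgroups: 15 of order 2, 10 of order 3 and 6 of
order 5.
-/

open Subgroup

theorem hasCliqueNum_of_adj_iff_ne {V α : Type*} [Finite V] {Γ : SimpleGraph V}
    (f : V → α) (hf : ∀ u v, Γ.Adj u v ↔ f u ≠ f v) : hasCliqueNum Γ (Set.range f).ncard := by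
  constructor
  · obtain ⟨t, -, hinjOn, himage⟩ :=
      (Set.surjOn_image f Set.univ).exists_subset_injOn_image_eq
    refine ⟨t.toFinite.toFinset, ?_, ?_⟩
    · intro u hu v hv huv
      rw [Set.Finite.coe_toFinset] at hu hv
      exact (hf u v).2 fun h => huv (hinjOn hu hv h)
    · rw [← Set.ncard_eq_toFinset_card _, ← hinjOn.ncard_image, himage, Set.image_univ]
  · intro s hs
    have hsinj : (s : Set V).InjOn f := fun u hu v hv h => by
      by_contra huv
      exact (hf u v).1 (hs hu hv huv) h
    rw [← Set.ncard_coe_finset, ← hsinj.ncard_image]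
    exact Set.ncard_le_ncard (Set.image_subset_range f s)

section

variable {G : Type*} [Group G]

theorem isCyclic_closure_pair_of_mem_zpowers {g x y : G} (hx : x ∈ zpowers g)
    (hy : y ∈ zpowers g) : IsCyclic (closure {x, y}) :=
  isCyclic_of_le <| (closure_le _).2 <| Set.insert_subset_iff.2 ⟨hx, Set.singleton_subset_iff.2 hy⟩

theorem one_mem_cyclicizer : (1 : G) ∈ cyclicizer G := fun y =>
  isCyclic_closure_pair_of_mem_zpowers (one_mem _) (mem_zpowers y)

theorem zpowers_eq_of_mem_zpowers_of_prime {g x : G} (hg : (orderOf g).Prime)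
    (hx : x ∈ zpowers g) (hx1 : x ≠ 1) : zpowers x = zpowers g := by
  have : Finite (zpowers g) :=
    Nat.finite_of_card_ne_zero (by rw [Nat.card_zpowers]; exact hg.ne_zero)
  refine eq_of_le_of_card_ge (zpowers_le.2 hx) ?_
  rw [Nat.card_zpowers, Nat.card_zpowers]
  exact ((hg.eq_one_or_self_of_dvd _ (orderOf_dvd_of_mem_zpowers hx)).resolve_left
    (orderOf_eq_one_iff.not.2 hx1)).ge

theorem zpowers_eq_of_isCyclic_closure_pair (hG : ∀ g : G, g ≠ 1 → (orderOf g).Prime) {x y : G}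
    (hx : x ≠ 1) (hy : y ≠ 1) (h : IsCyclic (closure {x, y})) : zpowers x = zpowers y := by
  obtain ⟨g, hg⟩ := (closure {x, y}).isCyclic_iff_exists_zpowers_eq_top.1 h
  have hxg : x ∈ zpowers g := hg ▸ subset_closure (by simp)
  have hyg : y ∈ zpowers g := hg ▸ subset_closure (by simp)
  have hg1 : g ≠ 1 := by
    rintro rfl
    exact hx (by simpa using hxg)
  rw [zpowers_eq_of_mem_zpowers_of_prime (hG g hg1) hxg hx,
    zpowers_eq_of_mem_zpowers_of_prime (hG g hg1) hyg hy]

theorem ne_one_of_notMem_cyclicizer {x : G} (hx : x ∉ cyclicizer G) : x ≠ 1 :=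
  fun h => hx (h ▸ one_mem_cyclicizer)

theorem noncyclicGraph_adj_iff (hG : ∀ g : G, g ≠ 1 → (orderOf g).Prime)
    {u v : {g : G // g ∉ cyclicizer G}} :
    (noncyclicGraph G).Adj u v ↔ zpowers (u : G) ≠ zpowers (v : G) := by
  refine ⟨fun ⟨_, hnc⟩ h => hnc ?_, fun h => ⟨fun huv => h (huv ▸ rfl), fun hc => h ?_⟩⟩
  · exact isCyclic_closure_pair_of_mem_zpowers (mem_zpowers _) (h ▸ mem_zpowers _)
  · exact zpowers_eq_of_isCyclic_closure_pair hG (ne_one_of_notMem_cyclicizer u.2)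
      (ne_one_of_notMem_cyclicizer v.2) hc

theorem mem_cyclicizer_iff (hG : ∀ g : G, g ≠ 1 → (orderOf g).Prime) (hcyc : ¬IsCyclic G)
    {x : G} : x ∈ cyclicizer G ↔ x = 1 := by
  refine ⟨fun hx => ?_, fun h => h ▸ one_mem_cyclicizer⟩
  by_contra hx1
  refine hcyc (isCyclic_iff_exists_zpowers_eq_top.2 ⟨x, (eq_top_iff' _).2 fun y => ?_⟩)
  by_cases hy1 : y = 1
  · exact hy1 ▸ one_mem _
  · exact zpowers_eq_of_isCyclic_closure_pair hG hx1 hy1 (hx y) ▸ mem_zpowers y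

theorem hasCliqueNum_noncyclicGraph [Finite G] (hG : ∀ g : G, g ≠ 1 → (orderOf g).Prime)
    (hcyc : ¬IsCyclic G) :
    hasCliqueNum (noncyclicGraph G) (zpowers '' {g : G | g ≠ 1}).ncard := by
  have hrange : Set.range (fun u : {g : G // g ∉ cyclicizer G} => zpowers (u : G)) =
      zpowers '' {g : G | g ≠ 1} := by
    ext H
    simp [mem_cyclicizer_iff hG hcyc]
  exact hrange ▸ hasCliqueNum_of_adj_iff_ne _ fun u v => noncyclicGraph_adj_iff hG

theorem coe_zpowers_eq_image_range [Finite G] [DecidableEq G] {g : G} {n : ℕ}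
    (hn : orderOf g ≤ n) : (zpowers g : Set G) = (Finset.range n).image (g ^ ·) := by
  ext x
  simp only [SetLike.mem_coe, Finset.coe_image, Finset.coe_range, Set.mem_image, Set.mem_Iio]
  refine ⟨fun hx => ?_, fun ⟨k, _, hk⟩ => hk ▸ pow_mem (mem_zpowers g) k⟩
  obtain ⟨k, hk, rfl⟩ := Finset.mem_image.1 (mem_zpowers_iff_mem_range_orderOf.1 hx)
  exact ⟨k, (Finset.mem_range.1 hk).trans_le hn, rfl⟩

end

set_option maxRecDepth 2000 in
theorem alternatingGroup_five_pow_eq_one (g : alternatingGroup (Fin 5)) :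
    g ^ 2 = 1 ∨ g ^ 3 = 1 ∨ g ^ 5 = 1 := by
  revert g
  decide

theorem alternatingGroup_five_orderOf {g : alternatingGroup (Fin 5)} (hg : g ≠ 1) :
    orderOf g = 2 ∨ orderOf g = 3 ∨ orderOf g = 5 := by
  have : Fact (Nat.Prime 5) := ⟨by norm_num⟩
  rcases alternatingGroup_five_pow_eq_one g with h | h | h
  · exact .inl (orderOf_eq_prime h hg)
  · exact .inr (.inl (orderOf_eq_prime h hg))
  · exact .inr (.inr (orderOf_eq_prime h hg))

theorem not_isCyclic_alternatingGroup_five : ¬IsCyclic (alternatingGroup (Fin 5)) := by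
  intro h
  have hprime :=
    Group.is_simple_iff_prime_card.1 (alternatingGroup.isSimpleGroup (α := Fin 5) (by simp))
  rw [nat_card_alternatingGroup, Nat.card_fin] at hprime
  norm_num [Nat.factorial] at hprime

-- `(Finset.range 5).image (g ^ ·)` is a decidable stand-in for `zpowers g`, all orders being `≤ 5`.
set_option maxRecDepth 2000 in
theorem card_image_zpowers_alternatingGroup_five :
    ((Finset.univ.filter (· ≠ 1)).image
      fun g : alternatingGroup (Fin 5) => (Finset.range 5).image (g ^ ·)).card = 31 := by
  decide

theorem ncard_zpowers_alternatingGroup_five :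
    (zpowers '' {g : alternatingGroup (Fin 5) | g ≠ 1}).ncard = 31 := by
  have horder (g : alternatingGroup (Fin 5)) : orderOf g ≤ 5 := by
    by_cases hg : g = 1
    · simp [hg]
    · rcases alternatingGroup_five_orderOf hg with h | h | h <;> omega
  rw [← SetLike.coe_injective.injOn.ncard_image, Set.image_image]
  simp_rw [coe_zpowers_eq_image_range (horder _)]
  rw [← Set.image_image (fun s : Finset (alternatingGroup (Fin 5)) =>
    (s : Set (alternatingGroup (Fin 5)))), Finset.coe_injective.injOn.ncard_image,
    ← card_image_zpowers_alternatingGroup_five, ← Set.ncard_coe_finset]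
  simp

theorem cliqueNum_noncyclicGraph_alternatingGroup_five :
    hasCliqueNum (noncyclicGraph (alternatingGroup (Fin 5))) 31 := by
  have hG (g : alternatingGroup (Fin 5)) (hg : g ≠ 1) : (orderOf g).Prime := by
    rcases alternatingGroup_five_orderOf hg with h | h | h <;> rw [h] <;> norm_num
  exact ncard_zpowers_alternatingGroup_five ▸
    hasCliqueNum_noncyclicGraph hG not_isCyclic_alternatingGroup_five
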